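/- For integers n, m ≥ 5, the mutual-visibility number of the direct product K_n × K_m is at most nm − 4. -/

import Mathlib

namespace MutualVisibility

open SimpleGraph

variable {V W : Type*}

/-- `x` and `y` are `X`-visible in `G`: there is a shortest `x,y`-path all of whose
internal vertices avoid `X`. -/
def Visible (G : SimpleGraph V) (X : Set V) (x y : V) : Prop :=
  ∃ p : G.Walk x y, p.length = G.dist x y ∧ ∀ v ∈ p.support, v ≠ x → v ≠ y → v ∉ X

/-- `X` is a mutual-visibility set: any two vertices of `X` are `X`-visible. -/
def IsMutualVisSet (G : SimpleGraph V) (X : Set V) : Prop :=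
  ∀ x ∈ X, ∀ y ∈ X, Visible G X x y

/-- outer mutual-visibility set -/
def IsOuterMutualVisSet (G : SimpleGraph V) (X : Set V) : Prop :=
  IsMutualVisSet G X ∧ ∀ x ∈ X, ∀ y ∉ X, Visible G X x y

/-- dual mutual-visibility set -/
def IsDualMutualVisSet (G : SimpleGraph V) (X : Set V) : Prop :=
  IsMutualVisSet G X ∧ ∀ x ∉ X, ∀ y ∉ X, Visible G X x y

/-- total mutual-visibility set -/
def IsTotalMutualVisSet (G : SimpleGraph V) (X : Set V) : Prop :=
  ∀ x y : V, Visible G X x y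

/-- mutual-visibility number μ(G) -/
noncomputable def mu (G : SimpleGraph V) : ℕ :=
  sSup {k | ∃ X : Set V, IsMutualVisSet G X ∧ X.ncard = k}

/-- outer mutual-visibility number μ_o(G) -/
noncomputable def muOuter (G : SimpleGraph V) : ℕ :=
  sSup {k | ∃ X : Set V, IsOuterMutualVisSet G X ∧ X.ncard = k}

/-- dual mutual-visibility number μ_d(G) -/
noncomputable def muDual (G : SimpleGraph V) : ℕ :=
  sSup {k | ∃ X : Set V, IsDualMutualVisSet G X ∧ X.ncard = k}

/-- total mutual-visibility number μ_t(G) -/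
noncomputable def muTotal (G : SimpleGraph V) : ℕ :=
  sSup {k | ∃ X : Set V, IsTotalMutualVisSet G X ∧ X.ncard = k}

/-- `H` contains a subgraph copy of `F`. -/
def ContainsCopy (F : SimpleGraph W) (H : SimpleGraph V) : Prop :=
  ∃ f : W → V, Function.Injective f ∧ ∀ a b, F.Adj a b → H.Adj (f a) (f b)

/-- The Turán number ex(n; F): max number of edges of an `n`-vertex graph with no copy of `F`. -/
noncomputable def exNum (n : ℕ) (F : SimpleGraph W) : ℕ :=
  sSup {k | ∃ H : SimpleGraph (Fin n), ¬ ContainsCopy F H ∧ H.edgeSet.ncard = k}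

/-- The direct (tensor/categorical) product of graphs. -/
def directProd (G : SimpleGraph V) (H : SimpleGraph W) : SimpleGraph (V × W) where
  Adj x y := G.Adj x.1 y.1 ∧ H.Adj x.2 y.2
  symm := ⟨fun _ _ ⟨h1, h2⟩ => ⟨G.adj_symm h1, H.adj_symm h2⟩⟩
  loopless := ⟨fun x h => G.loopless.irrefl x.1 h.1⟩

/-- The join `G + H` of two graphs. -/
def graphJoin (G : SimpleGraph V) (H : SimpleGraph W) : SimpleGraph (V ⊕ W) where
  Adj u v := match u, v with
    | Sum.inl a, Sum.inl b => G.Adj a b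
    | Sum.inr a, Sum.inr b => H.Adj a b
    | _, _ => True
  symm := ⟨fun u v => match u, v with
    | Sum.inl _, Sum.inl _ => fun h => G.adj_symm h
    | Sum.inr _, Sum.inr _ => fun h => H.adj_symm h
    | Sum.inl _, Sum.inr _ => fun _ => trivial
    | Sum.inr _, Sum.inl _ => fun _ => trivial⟩
  loopless := ⟨fun u => match u with
    | Sum.inl a => G.loopless.irrefl a
    | Sum.inr a => H.loopless.irrefl a⟩

/-- A big-μ graph: `G = (K_1 ∪ K_t) + H` for some `t ≥ 0` and some graph `H`. -/
def IsBigMu {V : Type} (G : SimpleGraph V) : Prop :=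
  ∃ (t : ℕ) (W : Type) (H : SimpleGraph W),
    Nonempty (G ≃g graphJoin ((⊤ : SimpleGraph (Fin 1)) ⊕g (⊤ : SimpleGraph (Fin t))) H)

/-- A cograph: a graph with no induced path on four vertices. -/
def IsCograph (G : SimpleGraph V) : Prop :=
  ¬ ∃ f : Fin 4 → V, Function.Injective f ∧
      ∀ a b, (pathGraph 4).Adj a b ↔ G.Adj (f a) (f b)

/-- The Petersen graph, realized as the Kneser graph K(5,2). -/
def petersen : SimpleGraph {s : Finset (Fin 5) // s.card = 2} where
  Adj a b := Disjoint a.1 b.1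
  symm := ⟨fun _ _ h => Disjoint.symm h⟩
  loopless := by
    constructor
    rintro ⟨s, hs⟩ (h : Disjoint s s)
    rw [disjoint_self, Finset.bot_eq_empty] at h
    subst h
    simp at hs

/-! If the complement `S` of a mutual-visibility set `X` of `K_n × K_m` had at most three
vertices, there would be two distinct vertices `x, y ∉ S` in a common row or column such that
every vertex of `S` lies in a row or column through `x` or `y`. Such `x, y` are at distance two,
and the middle vertex of any shortest `x,y`-path differs from both of them in both coordinates,
so it lies outside `S`, i.e. in `X`: the two are not `X`-visible.

The pair exists by a short case analysis. If `S` meets at most two columns, take these columns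
and a row avoiding `S` (symmetrically for rows). Otherwise `S = {a, b, c}` with pairwise distinct
rows and columns, and `x = (a₁, b₂)`, `y = (a₁, c₂)` work. -/

theorem Visible.exists_mem_commonNeighbors_notMem {G : SimpleGraph V} {X : Set V} {x y : V}
    (h : Visible G X x y) (h2 : G.edist x y = 2) :
    ∃ v ∈ G.commonNeighbors x y, v ∉ X := by
  obtain ⟨p, hlen, hint⟩ := h
  have hp : p.length = 2 := by rw [hlen, SimpleGraph.dist, h2]; rfl
  have hxv : G.Adj x (p.getVert 1) := by
    simpa only [Walk.getVert_zero] using p.adj_getVert_succ (i := 0) (by omega)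
  have hvy : G.Adj (p.getVert 1) y := by
    have h := p.adj_getVert_succ (i := 1) (by omega)
    rwa [show 1 + 1 = p.length by omega, Walk.getVert_length] at h
  exact ⟨p.getVert 1, ⟨hxv, hvy.symm⟩, hint _ (p.getVert_mem_support 1) hxv.ne.symm hvy.ne⟩

section CompleteDirectProduct

variable {α β : Type*}

theorem exists_notMem_of_ncard_lt_card {s : Set α} (h : s.ncard < Nat.card α) : ∃ a, a ∉ s := by
  by_contra! hs
  rw [Set.eq_univ_of_forall hs, Set.ncard_univ] at h
  exact h.false

theorem exists_ne_ne_of_three_le_card (h : 3 ≤ Nat.card α) (a b : α) : ∃ c, c ≠ a ∧ c ≠ b := by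
  obtain ⟨c, hc⟩ := exists_notMem_of_ncard_lt_card (s := {a, b})
    (((Set.ncard_insert_le a {b}).trans (by simp)).trans_lt h)
  simp only [Set.mem_insert_iff, Set.mem_singleton_iff, not_or] at hc
  exact ⟨c, hc⟩

theorem directProd_top_adj {x y : α × β} :
    (directProd ⊤ ⊤ : SimpleGraph (α × β)).Adj x y ↔ x.1 ≠ y.1 ∧ x.2 ≠ y.2 :=
  Iff.rfl

theorem IsMutualVisSet.exists_notMem_directProd_top (hα : 3 ≤ Nat.card α) (hβ : 3 ≤ Nat.card β)
    {X : Set (α × β)} (hX : IsMutualVisSet (directProd ⊤ ⊤) X) {x y : α × β} (hx : x ∈ X)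
    (hy : y ∈ X) (hxy : x ≠ y) (hline : x.1 = y.1 ∨ x.2 = y.2) :
    ∃ v ∉ X, v.1 ≠ x.1 ∧ v.1 ≠ y.1 ∧ v.2 ≠ x.2 ∧ v.2 ≠ y.2 := by
  have hcn : ∀ v, v ∈ (directProd ⊤ ⊤).commonNeighbors x y ↔
      v.1 ≠ x.1 ∧ v.1 ≠ y.1 ∧ v.2 ≠ x.2 ∧ v.2 ≠ y.2 := fun v => by
    simp only [mem_commonNeighbors, directProd_top_adj]
    grind
  obtain ⟨i, hi⟩ := exists_ne_ne_of_three_le_card hα x.1 y.1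
  obtain ⟨j, hj⟩ := exists_ne_ne_of_three_le_card hβ x.2 y.2
  have h2 : (directProd ⊤ ⊤).edist x y = 2 := by
    refine edist_eq_two_iff.mpr ⟨hxy, fun hadj => ?_, (i, j), (hcn _).mpr ⟨hi.1, hi.2, hj.1, hj.2⟩⟩
    rw [directProd_top_adj] at hadj
    tauto
  obtain ⟨v, hv, hvX⟩ := (hX x hx y hy).exists_mem_commonNeighbors_notMem h2
  exact ⟨v, hvX, (hcn v).mp hv⟩

def IsCollinearCover (S : Set (α × β)) (x y : α × β) : Prop :=
  x ∉ S ∧ y ∉ S ∧ x ≠ y ∧ (x.1 = y.1 ∨ x.2 = y.2) ∧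
    ∀ s ∈ S, s.1 = x.1 ∨ s.1 = y.1 ∨ s.2 = x.2 ∨ s.2 = y.2

theorem IsMutualVisSet.not_isCollinearCover_compl (hα : 3 ≤ Nat.card α) (hβ : 3 ≤ Nat.card β)
    {X : Set (α × β)} (hX : IsMutualVisSet (directProd ⊤ ⊤) X) (x y : α × β) :
    ¬ IsCollinearCover Xᶜ x y := by
  rintro ⟨hx, hy, hxy, hline, hcover⟩
  obtain ⟨v, hvX, hv⟩ :=
    hX.exists_notMem_directProd_top hα hβ (not_not.mp hx) (not_not.mp hy) hxy hline
  have := hcover v hvX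
  tauto

theorem IsCollinearCover.of_preimage_swap {S : Set (α × β)} {x y : β × α}
    (h : IsCollinearCover (Prod.swap ⁻¹' S) x y) : IsCollinearCover S x.swap y.swap := by
  obtain ⟨hx, hy, hxy, hline, hcover⟩ := h
  refine ⟨hx, hy, fun h => hxy (Prod.swap_injective h), hline.symm, fun s hs => ?_⟩
  have := hcover s.swap (by simpa using hs)
  simp only [Prod.fst_swap, Prod.snd_swap] at this ⊢
  tauto

theorem exists_isCollinearCover_of_ncard_image_snd_le_two [Finite α] [Finite β]
    (hα : 4 ≤ Nat.card α) (hβ : 2 ≤ Nat.card β) {S : Set (α × β)} (hS : S.ncard ≤ 3)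
    (hcols : (Prod.snd '' S).ncard ≤ 2) : ∃ x y, IsCollinearCover S x y := by
  obtain ⟨i, hi⟩ := exists_notMem_of_ncard_lt_card (s := Prod.fst '' S)
    (((Set.ncard_image_le S.toFinite).trans hS).trans_lt hα)
  obtain ⟨t, hcols_t, -, ht⟩ := Set.exists_subsuperset_card_eq (Set.subset_univ _) hcols
    (by rwa [Set.ncard_univ])
  obtain ⟨j, j', hjj', rfl⟩ := Set.ncard_eq_two.mp ht
  have hrow : ∀ k, (i, k) ∉ S := fun k hk => hi ⟨_, hk, rfl⟩
  refine ⟨(i, j), (i, j'), hrow j, hrow j', fun h => hjj' (congrArg Prod.snd h), Or.inl rfl,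
    fun s hs => ?_⟩
  have := hcols_t ⟨s, hs, rfl⟩
  simp only [Set.mem_insert_iff, Set.mem_singleton_iff] at this
  tauto

theorem exists_isCollinearCover_of_injOn {S : Set (α × β)} (hS : S.ncard = 3)
    (hrows : S.InjOn Prod.fst) (hcols : S.InjOn Prod.snd) : ∃ x y, IsCollinearCover S x y := by
  obtain ⟨a, b, c, hab, hac, hbc, rfl⟩ := Set.ncard_eq_three.mp hS
  have hne : ∀ ⦃s t⦄, s ∈ ({a, b, c} : Set (α × β)) → t ∈ ({a, b, c} : Set (α × β)) →
      s ≠ t → s.1 ≠ t.1 ∧ s.2 ≠ t.2 := fun s t hs ht hst =>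
    ⟨fun h => hst (hrows hs ht h), fun h => hst (hcols hs ht h)⟩
  have hab' := hne (by simp) (by simp) hab
  have hac' := hne (by simp) (by simp) hac
  have hbc' := hne (by simp) (by simp) hbc
  refine ⟨(a.1, b.2), (a.1, c.2), ?_, ?_, ?_, Or.inl rfl, ?_⟩ <;> grind [Prod.ext_iff]

theorem exists_isCollinearCover [Finite α] [Finite β] (hα : 4 ≤ Nat.card α)
    (hβ : 4 ≤ Nat.card β) {S : Set (α × β)} (hS : S.ncard ≤ 3) : ∃ x y, IsCollinearCover S x y := by
  by_cases hcols : (Prod.snd '' S).ncard ≤ 2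
  · exact exists_isCollinearCover_of_ncard_image_snd_le_two hα (by omega) hS hcols
  by_cases hrows : (Prod.fst '' S).ncard ≤ 2
  · have hswap : Prod.swap ⁻¹' S = Prod.swap '' S :=
      (congrFun Set.image_swap_eq_preimage_swap S).symm
    obtain ⟨x, y, hxy⟩ := exists_isCollinearCover_of_ncard_image_snd_le_two hβ (by omega)
      (S := Prod.swap ⁻¹' S) (by rwa [hswap, Set.ncard_image_of_injective _ Prod.swap_injective])
      (by rwa [hswap, Set.image_image])
    exact ⟨x.swap, y.swap, hxy.of_preimage_swap⟩
  have hfst := Set.ncard_image_le (f := Prod.fst) S.toFinite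
  have hsnd := Set.ncard_image_le (f := Prod.snd) S.toFinite
  exact exists_isCollinearCover_of_injOn (by omega)
    (Set.injOn_of_ncard_image_eq (by omega)) (Set.injOn_of_ncard_image_eq (by omega))

theorem IsMutualVisSet.four_le_ncard_compl [Finite α] [Finite β] (hα : 4 ≤ Nat.card α)
    (hβ : 4 ≤ Nat.card β) {X : Set (α × β)} (hX : IsMutualVisSet (directProd ⊤ ⊤) X) :
    4 ≤ Xᶜ.ncard := by
  by_contra! h
  obtain ⟨x, y, hxy⟩ := exists_isCollinearCover hα hβ (Nat.le_of_lt_succ h)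
  exact hX.not_isCollinearCover_compl (by omega) (by omega) x y hxy

end CompleteDirectProduct

theorem mu_directProd_complete_le (n m : ℕ) (hn : 5 ≤ n) (hm : 5 ≤ m) :
    mu (directProd (⊤ : SimpleGraph (Fin n)) (⊤ : SimpleGraph (Fin m))) ≤ n * m - 4 := by
  refine csSup_le' ?_
  rintro k ⟨X, hX, rfl⟩
  have hcompl := hX.four_le_ncard_compl (by rw [Nat.card_fin]; omega) (by rw [Nat.card_fin]; omega)
  have hsum := Set.ncard_add_ncard_compl X
  rw [Nat.card_prod, Nat.card_fin, Nat.card_fin] at hsum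
  omega
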